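/- Assume I*₁ > 0 and I*₂ > 0, and let ε = max(α*/I*₁, 2β*/I*₂). Then C_O ⊆ C_{I,ε}; that is, C_{I,ε} is an ε-approximated capacity region. -/

import Mathlib

/-!
Compare a joint input `P` with the product input `P̃ ⊗ P_{X₂}`, for any input `P̃` on `𝒳₁`.
On the link `X₁ → Y₂`, each conditional term is at most the capacity of the channel at `x₂`,
which exceeds `𝓘(P̃, ·)` by at most the gap `sup_{x₂} |𝓘(P̃, ·) - capacity|`. On the link
`X₂ → Y₁`, replacing every channel `P_{Y₁|X₁=x₁,X₂}` by the one at a fixed `x₀` costs `β*`,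
concavity of mutual information in the input merges the conditionals `P_{X₂|X₁=x₁}` into
`P_{X₂}`, and moving back to `x₁` costs `β*` again. Hence every rate pair of `P`, lowered by
the gap and by `2β*`, is achieved by a product input; the inner bound is closed, so the gap
may be replaced by its infimum `α*`.
-/

open scoped BigOperators

/-- `P` is a probability distribution on the finite alphabet `A`. -/
def IsDist {A : Type*} [Fintype A] (P : A → ℝ) : Prop :=
  (∀ a, 0 ≤ P a) ∧ ∑ a, P a = 1

/-- Input–output mutual information 𝓘(P, W) (in bits) of a channel `W`
from the finite alphabet `A` to the finite alphabet `B` under input distribution `P`. -/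
noncomputable def mutInfo {A B : Type*} [Fintype A] [Fintype B]
    (P : A → ℝ) (W : A → B → ℝ) : ℝ :=
  ∑ a, ∑ b, P a * W a b * Real.logb 2 (W a b / ∑ a', P a' * W a' b)

/-- Shannon entropy (base 2) of a distribution on a finite alphabet. -/
noncomputable def ent {B : Type*} [Fintype B] (Q : B → ℝ) : ℝ :=
  -∑ b, Q b * Real.logb 2 (Q b)

section TWC

variable {X1 X2 Y1 Y2 : Type*} [Fintype X1] [Fintype X2] [Fintype Y1] [Fintype Y2]

/-- A joint input distribution on `X1 × X2`. -/
def IsJointDist (P : X1 → X2 → ℝ) : Prop :=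
  (∀ x1 x2, 0 ≤ P x1 x2) ∧ ∑ x1, ∑ x2, P x1 x2 = 1

/-- Marginal of a joint input distribution on `X1`. -/
noncomputable def margin1 (P : X1 → X2 → ℝ) (x1 : X1) : ℝ := ∑ x2, P x1 x2

/-- Marginal of a joint input distribution on `X2`. -/
noncomputable def margin2 (P : X1 → X2 → ℝ) (x2 : X2) : ℝ := ∑ x1, P x1 x2

/-- Conditional distribution P_{X₁|X₂=x₂}. -/
noncomputable def cond1given2 (P : X1 → X2 → ℝ) (x2 : X2) (x1 : X1) : ℝ :=
  P x1 x2 / margin2 P x2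

/-- Conditional distribution P_{X₂|X₁=x₁}. -/
noncomputable def cond2given1 (P : X1 → X2 → ℝ) (x1 : X1) (x2 : X2) : ℝ :=
  P x1 x2 / margin1 P x1

/-- The conditional mutual information I(X₁;Y₂|X₂) under the joint input distribution `P`,
where `W2` is the marginal channel P_{Y₂|X₁,X₂}. -/
noncomputable def condMI12 (P : X1 → X2 → ℝ) (W2 : X1 → X2 → Y2 → ℝ) : ℝ :=
  ∑ x2, margin2 P x2 * mutInfo (cond1given2 P x2) (fun x1 => W2 x1 x2)

/-- The conditional mutual information I(X₂;Y₁|X₁) under the joint input distribution `P`,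
where `W1` is the marginal channel P_{Y₁|X₁,X₂}. -/
noncomputable def condMI21 (P : X1 → X2 → ℝ) (W1 : X1 → X2 → Y1 → ℝ) : ℝ :=
  ∑ x1, margin1 P x1 * mutInfo (cond2given1 P x1) (fun x2 => W1 x1 x2)

/-- The rate region 𝓡(P_{X₁,X₂}). -/
noncomputable def rateRegion (W1 : X1 → X2 → Y1 → ℝ) (W2 : X1 → X2 → Y2 → ℝ)
    (P : X1 → X2 → ℝ) : Set (ℝ × ℝ) :=
  {r | 0 ≤ r.1 ∧ r.1 ≤ condMI12 P W2 ∧ 0 ≤ r.2 ∧ r.2 ≤ condMI21 P W1}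

/-- Shannon's inner bound C_I: the closure of the convex hull of the union of the
rate regions of all product input distributions. -/
noncomputable def innerBound (W1 : X1 → X2 → Y1 → ℝ) (W2 : X1 → X2 → Y2 → ℝ) :
    Set (ℝ × ℝ) :=
  closure (convexHull ℝ
    (⋃ P ∈ {P : X1 → X2 → ℝ |
        ∃ P1 P2, IsDist P1 ∧ IsDist P2 ∧ P = fun x1 x2 => P1 x1 * P2 x2},
      rateRegion W1 W2 P))

/-- Shannon's outer bound C_O: the union of the rate regions of all joint input
distributions. -/
noncomputable def outerBound (W1 : X1 → X2 → Y1 → ℝ) (W2 : X1 → X2 → Y2 → ℝ) :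
    Set (ℝ × ℝ) :=
  ⋃ P ∈ {P : X1 → X2 → ℝ | IsJointDist P}, rateRegion W1 W2 P

/-- The largest input–output mutual information of the one-way channel
P_{Y₂|X₁,X₂=x₂}. -/
noncomputable def capAt (W2 : X1 → X2 → Y2 → ℝ) (x2 : X2) : ℝ :=
  sSup {I | ∃ P : X1 → ℝ, IsDist P ∧ I = mutInfo P (fun x1 => W2 x1 x2)}

/-- α*: how close the channels {P_{Y₂|X₁,X₂=x₂}} are to having a common optimal
input distribution. -/
noncomputable def alphaStar (W2 : X1 → X2 → Y2 → ℝ) : ℝ :=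
  sInf {a | ∃ Pt : X1 → ℝ, IsDist Pt ∧
    a = ⨆ x2, |mutInfo Pt (fun x1 => W2 x1 x2) - capAt W2 x2|}

/-- β*: the degree of invariance in the input–output mutual information of the
channels {P_{Y₁|X₁=x₁,X₂}}. -/
noncomputable def betaStar (W1 : X1 → X2 → Y1 → ℝ) : ℝ :=
  sSup {b | ∃ (P : X2 → ℝ) (x1 x1' : X1), IsDist P ∧ x1 ≠ x1' ∧
    b = |mutInfo P (fun x2 => W1 x1 x2) - mutInfo P (fun x2 => W1 x1' x2)|}

/-- I*₁ = max_{x₂} max_{P} 𝓘(P, P_{Y₂|X₁,X₂=x₂}). -/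
noncomputable def IStar1 (W2 : X1 → X2 → Y2 → ℝ) : ℝ :=
  sSup {I | ∃ (x2 : X2) (P : X1 → ℝ), IsDist P ∧ I = mutInfo P (fun x1 => W2 x1 x2)}

/-- I*₂ = max_{x₁} max_{P} 𝓘(P, P_{Y₁|X₁=x₁,X₂}). -/
noncomputable def IStar2 (W1 : X1 → X2 → Y1 → ℝ) : ℝ :=
  sSup {I | ∃ (x1 : X1) (P : X2 → ℝ), IsDist P ∧ I = mutInfo P (fun x2 => W1 x1 x2)}

/-- Condition (a): `Pstar` is a common optimal input distribution for the channels
{P_{Y₂|X₁,X₂=x₂} : x₂ ∈ 𝒳₂}. -/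
def CondA (W2 : X1 → X2 → Y2 → ℝ) (Pstar : X1 → ℝ) : Prop :=
  IsDist Pstar ∧ ∀ x2 : X2, ∀ P : X1 → ℝ, IsDist P →
    mutInfo P (fun x1 => W2 x1 x2) ≤ mutInfo Pstar (fun x1 => W2 x1 x2)

/-- Condition (b1): for every input distribution on 𝒳₂, the input–output mutual
information of P_{Y₁|X₁=x₁,X₂} does not depend on x₁. -/
def CondB1 (W1 : X1 → X2 → Y1 → ℝ) : Prop :=
  ∀ P : X2 → ℝ, IsDist P → ∀ x1 x1' : X1,
    mutInfo P (fun x2 => W1 x1 x2) = mutInfo P (fun x2 => W1 x1' x2)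

/-- H(Y₁|X₁,X₂) under the joint input distribution `P`. -/
noncomputable def condEntFull (P : X1 → X2 → ℝ) (W1 : X1 → X2 → Y1 → ℝ) : ℝ :=
  ∑ x1, ∑ x2, P x1 x2 * ent (W1 x1 x2)

/-- H(Y₁|X₁) under the joint input distribution `P`. -/
noncomputable def condEntY1X1 (P : X1 → X2 → ℝ) (W1 : X1 → X2 → Y1 → ℝ) : ℝ :=
  ∑ x1, margin1 P x1 * ent (fun y1 => ∑ x2, cond2given1 P x1 x2 * W1 x1 x2 y1)

/-- Condition (b2), part (i): H(Y₁|X₁,X₂) depends on the joint input distribution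
only through its marginal on 𝒳₂. -/
def CondB2i (W1 : X1 → X2 → Y1 → ℝ) : Prop :=
  ∀ P Q : X1 → X2 → ℝ, IsJointDist P → IsJointDist Q →
    margin2 P = margin2 Q → condEntFull P W1 = condEntFull Q W1

/-- Condition (b2), part (ii), relative to the common optimal input `Pstar`:
H⁽¹⁾(Y₁|X₁) ≤ H⁽²⁾(Y₁|X₁) where P⁽²⁾ = P*_{X₁}·P⁽¹⁾_{X₂}. -/
def CondB2ii (W1 : X1 → X2 → Y1 → ℝ) (Pstar : X1 → ℝ) : Prop :=
  ∀ P : X1 → X2 → ℝ, IsJointDist P →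
    condEntY1X1 P W1 ≤ condEntY1X1 (fun x1 x2 => Pstar x1 * margin2 P x2) W1

theorem abs_sub_max_sub_zero_le {x a : ℝ} (hx : 0 ≤ x) (ha : 0 ≤ a) :
    |x - max (x - a) 0| ≤ a := by
  rw [abs_le]
  constructor <;> linarith [le_max_left (x - a) 0, max_le (by linarith : x - a ≤ x) hx]

section Information

variable {A B : Type*} [Fintype A] [Fintype B]

theorem IsDist.nonempty {P : A → ℝ} (hP : IsDist P) : Nonempty A := by
  by_contra h
  simpa [not_nonempty_iff.mp h] using hP.2

theorem IsDist.sum_mul_le_sum_mul_add {w : A → ℝ} (hw : IsDist w) {f g : A → ℝ} {c : ℝ}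
    (h : ∀ a, w a ≠ 0 → f a ≤ g a + c) : ∑ a, w a * f a ≤ ∑ a, w a * g a + c :=
  calc ∑ a, w a * f a ≤ ∑ a, w a * (g a + c) := by
        refine Finset.sum_le_sum fun a _ => ?_
        rcases eq_or_ne (w a) 0 with hwa | hwa
        · simp [hwa]
        · exact mul_le_mul_of_nonneg_left (h a hwa) (hw.1 a)
    _ = ∑ a, w a * g a + c := by
        simp only [mul_add, Finset.sum_add_distrib, ← Finset.sum_mul, hw.2, one_mul]

theorem ent_eq_sum_negMulLog (Q : B → ℝ) :
    ent Q = (∑ b, Real.negMulLog (Q b)) / Real.log 2 := by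
  simp only [ent, Real.negMulLog, Real.logb, Finset.sum_div, ← Finset.sum_neg_distrib]
  exact Finset.sum_congr rfl fun b _ => by ring

theorem ent_nonneg {Q : B → ℝ} (hQ : IsDist Q) : 0 ≤ ent Q := by
  rw [ent_eq_sum_negMulLog]
  refine div_nonneg (Finset.sum_nonneg fun b _ => Real.negMulLog_nonneg (hQ.1 b) ?_)
    (Real.log_nonneg one_le_two)
  exact hQ.2 ▸ Finset.single_le_sum (fun b _ => hQ.1 b) (Finset.mem_univ b)

theorem ent_le_card {Q : B → ℝ} (hQ : ∀ b, 0 ≤ Q b) :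
    ent Q ≤ Fintype.card B / Real.log 2 := by
  rw [ent_eq_sum_negMulLog]
  gcongr
  calc ∑ b, Real.negMulLog (Q b) ≤ ∑ _b : B, (1 : ℝ) := Finset.sum_le_sum fun b _ =>
        (Real.negMulLog_le_one_sub_self (hQ b)).trans (by linarith [hQ b])
    _ = Fintype.card B := by simp

theorem sum_mul_ent_le_ent_sum {ι : Type*} {t : Finset ι} {w : ι → ℝ} {Q : ι → B → ℝ}
    (hw0 : ∀ i ∈ t, 0 ≤ w i) (hw1 : ∑ i ∈ t, w i = 1) (hQ : ∀ i ∈ t, ∀ b, 0 ≤ Q i b) :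
    ∑ i ∈ t, w i * ent (Q i) ≤ ent (fun b => ∑ i ∈ t, w i * Q i b) := by
  simp only [ent_eq_sum_negMulLog, mul_div_assoc', ← Finset.sum_div, Finset.mul_sum]
  gcongr
  rw [Finset.sum_comm]
  exact Finset.sum_le_sum fun b _ =>
    Real.concaveOn_negMulLog.le_map_sum hw0 hw1 fun i hi => Set.mem_Ici.mpr (hQ i hi b)

theorem mutInfo_eq_ent_sub {P : A → ℝ} {W : A → B → ℝ} (hP : ∀ a, 0 ≤ P a)
    (hW : ∀ a b, 0 ≤ W a b) :
    mutInfo P W = ent (fun b => ∑ a, P a * W a b) - ∑ a, P a * ent (W a) := by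
  set Q : B → ℝ := fun b => ∑ a, P a * W a b
  have hterm : ∀ a b, P a * W a b * Real.logb 2 (W a b / Q b) =
      P a * (W a b * Real.logb 2 (W a b)) - P a * W a b * Real.logb 2 (Q b) := by
    intro a b
    rcases eq_or_lt_of_le (mul_nonneg (hP a) (hW a b)) with hPW | hPW
    · rcases mul_eq_zero.mp hPW.symm with h | h <;> simp [h]
    · have hQ : P a * W a b ≤ Q b :=
        Finset.single_le_sum (fun a' _ => mul_nonneg (hP a') (hW a' b)) (Finset.mem_univ a)
      rw [Real.logb_div (pos_of_mul_pos_right hPW (hP a)).ne' (hPW.trans_le hQ).ne']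
      ring
  calc mutInfo P W
      = ∑ a, ∑ b, (P a * (W a b * Real.logb 2 (W a b)) - P a * W a b * Real.logb 2 (Q b)) :=
        Finset.sum_congr rfl fun a _ => Finset.sum_congr rfl fun b _ => hterm a b
    _ = ent Q - ∑ a, P a * ent (W a) := by
        simp only [Finset.sum_sub_distrib, ent, mul_neg, Finset.sum_neg_distrib, Finset.mul_sum]
        rw [Finset.sum_comm (f := fun a b => P a * W a b * Real.logb 2 (Q b))]
        simp only [Q, ← Finset.sum_mul]
        ring

theorem mutInfo_nonneg {P : A → ℝ} {W : A → B → ℝ} (hP : IsDist P) (hW : ∀ a b, 0 ≤ W a b) :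
    0 ≤ mutInfo P W := by
  rw [mutInfo_eq_ent_sub hP.1 hW, sub_nonneg]
  exact sum_mul_ent_le_ent_sum (fun a _ => hP.1 a) hP.2 fun a _ => hW a

theorem mutInfo_le_card {P : A → ℝ} {W : A → B → ℝ} (hP : ∀ a, 0 ≤ P a)
    (hW : ∀ a, IsDist (W a)) : mutInfo P W ≤ Fintype.card B / Real.log 2 := by
  rw [mutInfo_eq_ent_sub hP fun a => (hW a).1]
  have hout : ent (fun b => ∑ a, P a * W a b) ≤ Fintype.card B / Real.log 2 :=
    ent_le_card fun b => Finset.sum_nonneg fun a _ => mul_nonneg (hP a) ((hW a).1 b)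
  have hnoise : 0 ≤ ∑ a, P a * ent (W a) :=
    Finset.sum_nonneg fun a _ => mul_nonneg (hP a) (ent_nonneg (hW a))
  linarith

theorem sum_mul_mutInfo_le_mutInfo_sum {ι : Type*} {t : Finset ι} {w : ι → ℝ}
    {P : ι → A → ℝ} {W : A → B → ℝ} (hw0 : ∀ i ∈ t, 0 ≤ w i) (hw1 : ∑ i ∈ t, w i = 1)
    (hP : ∀ i ∈ t, ∀ a, 0 ≤ P i a) (hW : ∀ a b, 0 ≤ W a b) :
    ∑ i ∈ t, w i * mutInfo (P i) W ≤ mutInfo (fun a => ∑ i ∈ t, w i * P i a) W := by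
  have hout : (fun b => ∑ a, (∑ i ∈ t, w i * P i a) * W a b) =
      fun b => ∑ i ∈ t, w i * ∑ a, P i a * W a b := by
    funext b
    simp only [Finset.sum_mul, Finset.mul_sum, mul_assoc]
    exact Finset.sum_comm
  have hnoise : ∑ a, (∑ i ∈ t, w i * P i a) * ent (W a) =
      ∑ i ∈ t, w i * ∑ a, P i a * ent (W a) := by
    simp only [Finset.sum_mul, Finset.mul_sum, mul_assoc]
    exact Finset.sum_comm
  have hmix : ∀ a, 0 ≤ ∑ i ∈ t, w i * P i a :=
    fun a => Finset.sum_nonneg fun i hi => mul_nonneg (hw0 i hi) (hP i hi a)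
  calc ∑ i ∈ t, w i * mutInfo (P i) W
      = ∑ i ∈ t, w i * ent (fun b => ∑ a, P i a * W a b) -
          ∑ i ∈ t, w i * ∑ a, P i a * ent (W a) := by
        rw [← Finset.sum_sub_distrib]
        exact Finset.sum_congr rfl fun i hi => by rw [mutInfo_eq_ent_sub (hP i hi) hW, mul_sub]
    _ ≤ ent (fun b => ∑ i ∈ t, w i * ∑ a, P i a * W a b) -
          ∑ i ∈ t, w i * ∑ a, P i a * ent (W a) := by
        gcongr
        exact sum_mul_ent_le_ent_sum hw0 hw1 fun i hi b =>
          Finset.sum_nonneg fun a _ => mul_nonneg (hP i hi a) (hW a b)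
    _ = mutInfo (fun a => ∑ i ∈ t, w i * P i a) W := by
        rw [mutInfo_eq_ent_sub hmix hW, hout, hnoise]

end Information

section Inputs

variable {P : X1 → X2 → ℝ}

theorem IsJointDist.isDist_margin1 (hP : IsJointDist P) : IsDist (margin1 P) :=
  ⟨fun x1 => Finset.sum_nonneg fun x2 _ => hP.1 x1 x2, hP.2⟩

theorem IsJointDist.isDist_margin2 (hP : IsJointDist P) : IsDist (margin2 P) :=
  ⟨fun x2 => Finset.sum_nonneg fun x1 _ => hP.1 x1 x2, Finset.sum_comm.trans hP.2⟩

theorem IsJointDist.isDist_cond1given2 (hP : IsJointDist P) {x2 : X2}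
    (h : margin2 P x2 ≠ 0) : IsDist (cond1given2 P x2) :=
  ⟨fun x1 => div_nonneg (hP.1 x1 x2) (hP.isDist_margin2.1 x2), by
    simp only [cond1given2, ← Finset.sum_div]
    exact div_self h⟩

theorem IsJointDist.isDist_cond2given1 (hP : IsJointDist P) {x1 : X1}
    (h : margin1 P x1 ≠ 0) : IsDist (cond2given1 P x1) :=
  ⟨fun x2 => div_nonneg (hP.1 x1 x2) (hP.isDist_margin1.1 x1), by
    simp only [cond2given1, ← Finset.sum_div]
    exact div_self h⟩

theorem IsJointDist.sum_margin1_mul_cond2given1 (hP : IsJointDist P) (x2 : X2) :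
    ∑ x1, margin1 P x1 * cond2given1 P x1 x2 = margin2 P x2 :=
  Finset.sum_congr rfl fun x1 _ => mul_div_cancel_of_imp' fun h =>
    (Finset.sum_eq_zero_iff_of_nonneg fun x2' _ => hP.1 x1 x2').mp h x2 (Finset.mem_univ x2)

end Inputs

section ProductInputs

variable {P1 : X1 → ℝ} {P2 : X2 → ℝ}

omit [Fintype X1] in
theorem margin1_mul (h2 : ∑ x2, P2 x2 = 1) : margin1 (fun x1 x2 => P1 x1 * P2 x2) = P1 :=
  funext fun x1 => by rw [margin1, ← Finset.mul_sum, h2, mul_one]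

omit [Fintype X2] in
theorem margin2_mul (h1 : ∑ x1, P1 x1 = 1) : margin2 (fun x1 x2 => P1 x1 * P2 x2) = P2 :=
  funext fun x2 => by rw [margin2, ← Finset.sum_mul, h1, one_mul]

theorem condMI12_mul (h1 : ∑ x1, P1 x1 = 1) (W2 : X1 → X2 → Y2 → ℝ) :
    condMI12 (fun x1 x2 => P1 x1 * P2 x2) W2 =
      ∑ x2, P2 x2 * mutInfo P1 (fun x1 => W2 x1 x2) := by
  rw [condMI12, margin2_mul h1]
  refine Finset.sum_congr rfl fun x2 _ => ?_
  rcases eq_or_ne (P2 x2) 0 with h | h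
  · simp [h]
  · have hcond : cond1given2 (fun x1 x2 => P1 x1 * P2 x2) x2 = P1 :=
      funext fun x1 => by rw [cond1given2, margin2_mul h1, mul_div_cancel_right₀ _ h]
    rw [hcond]

theorem condMI21_mul (h2 : ∑ x2, P2 x2 = 1) (W1 : X1 → X2 → Y1 → ℝ) :
    condMI21 (fun x1 x2 => P1 x1 * P2 x2) W1 =
      ∑ x1, P1 x1 * mutInfo P2 (fun x2 => W1 x1 x2) := by
  rw [condMI21, margin1_mul h2]
  refine Finset.sum_congr rfl fun x1 _ => ?_
  rcases eq_or_ne (P1 x1) 0 with h | h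
  · simp [h]
  · have hcond : cond2given1 (fun x1 x2 => P1 x1 * P2 x2) x1 = P2 :=
      funext fun x2 => by rw [cond2given1, margin1_mul h2, mul_div_cancel_left₀ _ h]
    rw [hcond]

theorem condMI12_mul_nonneg (hP1 : IsDist P1) (hP2 : ∀ x2, 0 ≤ P2 x2)
    {W2 : X1 → X2 → Y2 → ℝ} (hW2 : ∀ x1 x2 y2, 0 ≤ W2 x1 x2 y2) :
    0 ≤ condMI12 (fun x1 x2 => P1 x1 * P2 x2) W2 := by
  rw [condMI12_mul hP1.2]
  exact Finset.sum_nonneg fun x2 _ =>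
    mul_nonneg (hP2 x2) (mutInfo_nonneg hP1 fun x1 => hW2 x1 x2)

theorem condMI21_mul_nonneg (hP1 : ∀ x1, 0 ≤ P1 x1) (hP2 : IsDist P2)
    {W1 : X1 → X2 → Y1 → ℝ} (hW1 : ∀ x1 x2 y1, 0 ≤ W1 x1 x2 y1) :
    0 ≤ condMI21 (fun x1 x2 => P1 x1 * P2 x2) W1 := by
  rw [condMI21_mul hP2.2]
  exact Finset.sum_nonneg fun x1 _ =>
    mul_nonneg (hP1 x1) (mutInfo_nonneg hP2 fun x2 => hW1 x1 x2)

end ProductInputs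

section Channels

variable {W1 : X1 → X2 → Y1 → ℝ} {W2 : X1 → X2 → Y2 → ℝ}

omit [Fintype X2] in
theorem mutInfo_le_capAt (hW2 : ∀ x1 x2, IsDist (W2 x1 x2)) {P : X1 → ℝ} (hP : IsDist P)
    (x2 : X2) : mutInfo P (fun x1 => W2 x1 x2) ≤ capAt W2 x2 :=
  le_csSup ⟨Fintype.card Y2 / Real.log 2, by
    rintro _ ⟨Q, hQ, rfl⟩
    exact mutInfo_le_card hQ.1 fun x1 => hW2 x1 x2⟩ ⟨P, hP, rfl⟩

omit [Fintype X2] in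
theorem mutInfo_le_IStar1 (hW2 : ∀ x1 x2, IsDist (W2 x1 x2)) {P : X1 → ℝ} (hP : IsDist P)
    (x2 : X2) : mutInfo P (fun x1 => W2 x1 x2) ≤ IStar1 W2 :=
  le_csSup ⟨Fintype.card Y2 / Real.log 2, by
    rintro _ ⟨x2', Q, hQ, rfl⟩
    exact mutInfo_le_card hQ.1 fun x1 => hW2 x1 x2'⟩ ⟨x2, P, hP, rfl⟩

omit [Fintype X1] in
theorem mutInfo_le_IStar2 (hW1 : ∀ x1 x2, IsDist (W1 x1 x2)) {P : X2 → ℝ} (hP : IsDist P)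
    (x1 : X1) : mutInfo P (fun x2 => W1 x1 x2) ≤ IStar2 W1 :=
  le_csSup ⟨Fintype.card Y1 / Real.log 2, by
    rintro _ ⟨x1', Q, hQ, rfl⟩
    exact mutInfo_le_card hQ.1 fun x2 => hW1 x1' x2⟩ ⟨x1, P, hP, rfl⟩

omit [Fintype X2] in
theorem IStar1_nonneg (hW2 : ∀ x1 x2, IsDist (W2 x1 x2)) : 0 ≤ IStar1 W2 :=
  Real.sSup_nonneg <| by
    rintro _ ⟨x2, P, hP, rfl⟩
    exact mutInfo_nonneg hP fun x1 => (hW2 x1 x2).1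

omit [Fintype X1] in
theorem IStar2_nonneg (hW1 : ∀ x1 x2, IsDist (W1 x1 x2)) : 0 ≤ IStar2 W1 :=
  Real.sSup_nonneg <| by
    rintro _ ⟨x1, P, hP, rfl⟩
    exact mutInfo_nonneg hP fun x2 => (hW1 x1 x2).1

omit [Fintype X1] in
theorem betaStar_nonneg : 0 ≤ betaStar W1 :=
  Real.sSup_nonneg <| by
    rintro _ ⟨P, x1, x1', -, -, rfl⟩
    exact abs_nonneg _

omit [Fintype X1] in
theorem mutInfo_le_mutInfo_add_betaStar (hW1 : ∀ x1 x2, IsDist (W1 x1 x2)) {P : X2 → ℝ}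
    (hP : IsDist P) (x1 x1' : X1) :
    mutInfo P (fun x2 => W1 x1 x2) ≤ mutInfo P (fun x2 => W1 x1' x2) + betaStar W1 := by
  rcases eq_or_ne x1 x1' with rfl | hne
  · linarith [betaStar_nonneg (W1 := W1)]
  have hbdd : BddAbove {b | ∃ (P : X2 → ℝ) (x1 x1' : X1), IsDist P ∧ x1 ≠ x1' ∧
      b = |mutInfo P (fun x2 => W1 x1 x2) - mutInfo P (fun x2 => W1 x1' x2)|} := by
    refine ⟨Fintype.card Y1 / Real.log 2, ?_⟩
    rintro _ ⟨Q, y, y', hQ, -, rfl⟩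
    exact abs_sub_le_of_nonneg_of_le (mutInfo_nonneg hQ fun x2 => (hW1 y x2).1)
      (mutInfo_le_card hQ.1 fun x2 => hW1 y x2) (mutInfo_nonneg hQ fun x2 => (hW1 y' x2).1)
      (mutInfo_le_card hQ.1 fun x2 => hW1 y' x2)
  have hβ : _ ≤ betaStar W1 := le_csSup hbdd ⟨P, x1, x1', hP, hne, rfl⟩
  linarith [le_abs_self (mutInfo P (fun x2 => W1 x1 x2) - mutInfo P (fun x2 => W1 x1' x2))]

theorem condMI12_le_IStar1 (hW2 : ∀ x1 x2, IsDist (W2 x1 x2)) {P : X1 → X2 → ℝ}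
    (hP : IsJointDist P) : condMI12 P W2 ≤ IStar1 W2 := by
  rw [condMI12]
  simpa using hP.isDist_margin2.sum_mul_le_sum_mul_add (g := 0) fun x2 h => by
    simpa using mutInfo_le_IStar1 hW2 (hP.isDist_cond1given2 h) x2

theorem condMI21_le_IStar2 (hW1 : ∀ x1 x2, IsDist (W1 x1 x2)) {P : X1 → X2 → ℝ}
    (hP : IsJointDist P) : condMI21 P W1 ≤ IStar2 W1 := by
  rw [condMI21]
  simpa using hP.isDist_margin1.sum_mul_le_sum_mul_add (g := 0) fun x1 h => by
    simpa using mutInfo_le_IStar2 hW1 (hP.isDist_cond2given1 h) x1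

noncomputable def capGap (W2 : X1 → X2 → Y2 → ℝ) (P : X1 → ℝ) : ℝ :=
  ⨆ x2, |mutInfo P (fun x1 => W2 x1 x2) - capAt W2 x2|

omit [Fintype X2] in
theorem capGap_nonneg (P : X1 → ℝ) : 0 ≤ capGap W2 P :=
  Real.iSup_nonneg fun _ => abs_nonneg _

theorem capAt_le_mutInfo_add_capGap (P : X1 → ℝ) (x2 : X2) :
    capAt W2 x2 ≤ mutInfo P (fun x1 => W2 x1 x2) + capGap W2 P := by
  have hle : |mutInfo P (fun x1 => W2 x1 x2) - capAt W2 x2| ≤ capGap W2 P :=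
    le_ciSup (f := fun x2 => |mutInfo P (fun x1 => W2 x1 x2) - capAt W2 x2|)
      (Set.finite_range _).bddAbove x2
  linarith [neg_abs_le (mutInfo P (fun x1 => W2 x1 x2) - capAt W2 x2)]

omit [Fintype X2] in
theorem alphaStar_nonneg : 0 ≤ alphaStar W2 :=
  Real.sInf_nonneg <| by
    rintro _ ⟨P, -, rfl⟩
    exact capGap_nonneg P

omit [Fintype X2] in
theorem alphaStar_mem_closure {P₀ : X1 → ℝ} (hP₀ : IsDist P₀) :
    alphaStar W2 ∈ closure {a | ∃ P, IsDist P ∧ a = capGap W2 P} :=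
  csInf_mem_closure ⟨_, P₀, hP₀, rfl⟩ ⟨0, by
    rintro _ ⟨P, -, rfl⟩
    exact capGap_nonneg P⟩

theorem condMI12_le_condMI12_mul_margin2_add_capGap (hW2 : ∀ x1 x2, IsDist (W2 x1 x2))
    {P : X1 → X2 → ℝ} (hP : IsJointDist P) {Pt : X1 → ℝ} (hPt : IsDist Pt) :
    condMI12 P W2 ≤ condMI12 (fun x1 x2 => Pt x1 * margin2 P x2) W2 + capGap W2 Pt := by
  rw [condMI12_mul hPt.2]
  exact hP.isDist_margin2.sum_mul_le_sum_mul_add fun x2 h =>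
    (mutInfo_le_capAt hW2 (hP.isDist_cond1given2 h) x2).trans
      (capAt_le_mutInfo_add_capGap Pt x2)

theorem condMI21_le_condMI21_mul_margin2_add_two_mul_betaStar
    (hW1 : ∀ x1 x2, IsDist (W1 x1 x2)) {P : X1 → X2 → ℝ} (hP : IsJointDist P)
    {Pt : X1 → ℝ} (hPt : IsDist Pt) :
    condMI21 P W1 ≤ condMI21 (fun x1 x2 => Pt x1 * margin2 P x2) W1 + 2 * betaStar W1 := by
  obtain ⟨x₀⟩ := hPt.nonempty
  have hm1 := hP.isDist_margin1
  have hm2 := hP.isDist_margin2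
  have hconcave : ∑ x1, margin1 P x1 * mutInfo (cond2given1 P x1) (fun x2 => W1 x₀ x2) ≤
      mutInfo (margin2 P) (fun x2 => W1 x₀ x2) :=
    calc _ ≤ mutInfo (fun x2 => ∑ x1, margin1 P x1 * cond2given1 P x1 x2)
            (fun x2 => W1 x₀ x2) :=
          sum_mul_mutInfo_le_mutInfo_sum (fun x1 _ => hm1.1 x1) hm1.2
            (fun x1 _ x2 => div_nonneg (hP.1 x1 x2) (hm1.1 x1)) fun x2 => (hW1 x₀ x2).1
      _ = _ := by rw [funext hP.sum_margin1_mul_cond2given1]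
  rw [condMI21_mul hm2.2]
  calc condMI21 P W1
      ≤ ∑ x1, margin1 P x1 * mutInfo (cond2given1 P x1) (fun x2 => W1 x₀ x2) + betaStar W1 :=
        hm1.sum_mul_le_sum_mul_add fun x1 h =>
          mutInfo_le_mutInfo_add_betaStar hW1 (hP.isDist_cond2given1 h) x1 x₀
    _ ≤ ∑ x1, Pt x1 * mutInfo (margin2 P) (fun x2 => W1 x₀ x2) + betaStar W1 := by
        rw [← Finset.sum_mul, hPt.2, one_mul]
        gcongr
    _ ≤ ∑ x1, Pt x1 * mutInfo (margin2 P) (fun x2 => W1 x1 x2) + betaStar W1 +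
          betaStar W1 := by
        gcongr
        exact hPt.sum_mul_le_sum_mul_add fun x1 _ =>
          mutInfo_le_mutInfo_add_betaStar hW1 hm2 x₀ x1
    _ = _ := by ring

theorem rateRegion_mul_subset_innerBound {P1 : X1 → ℝ} {P2 : X2 → ℝ} (hP1 : IsDist P1)
    (hP2 : IsDist P2) : rateRegion W1 W2 (fun x1 x2 => P1 x1 * P2 x2) ⊆ innerBound W1 W2 :=
  fun _ hr =>
    subset_closure (subset_convexHull ℝ _ (Set.mem_biUnion ⟨P1, P2, hP1, hP2, rfl⟩ hr))

theorem max_sub_mem_innerBound_of_mem_rateRegion (hW1 : ∀ x1 x2, IsDist (W1 x1 x2))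
    (hW2 : ∀ x1 x2, IsDist (W2 x1 x2)) {P : X1 → X2 → ℝ} (hP : IsJointDist P) {r : ℝ × ℝ}
    (hr : r ∈ rateRegion W1 W2 P) :
    (max (r.1 - alphaStar W2) 0, max (r.2 - 2 * betaStar W1) 0) ∈ innerBound W1 W2 := by
  obtain ⟨-, hr1, -, hr2⟩ := hr
  have hclosed : IsClosed
      {a : ℝ | (max (r.1 - a) 0, max (r.2 - 2 * betaStar W1) 0) ∈ innerBound W1 W2} :=
    isClosed_closure.preimage (by fun_prop)
  refine closure_minimal ?_ hclosed (alphaStar_mem_closure hP.isDist_margin1)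
  rintro _ ⟨Pt, hPt, rfl⟩
  have hm2 := hP.isDist_margin2
  have h12 := condMI12_le_condMI12_mul_margin2_add_capGap hW2 hP hPt
  have h21 := condMI21_le_condMI21_mul_margin2_add_two_mul_betaStar hW1 hP hPt
  refine rateRegion_mul_subset_innerBound hPt hm2 ⟨le_max_right _ _, max_le (by linarith) ?_,
    le_max_right _ _, max_le (by linarith) ?_⟩
  · exact condMI12_mul_nonneg hPt hm2.1 fun x1 x2 => (hW2 x1 x2).1
  · exact condMI21_mul_nonneg hPt.1 hm2 fun x1 x2 => (hW1 x1 x2).1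

end Channels

theorem stmt14_general
    (W1 : X1 → X2 → Y1 → ℝ) (W2 : X1 → X2 → Y2 → ℝ)
    (hW1 : ∀ x1 x2, IsDist (W1 x1 x2)) (hW2 : ∀ x1 x2, IsDist (W2 x1 x2)) :
    outerBound W1 W2 ⊆
      {r : ℝ × ℝ | r ∈ Set.Icc 0 (IStar1 W2) ×ˢ Set.Icc 0 (IStar2 W1) ∧
        ∃ r' ∈ innerBound W1 W2,
          max (|r.1 - r'.1| / IStar1 W2) (|r.2 - r'.2| / IStar2 W1) ≤
            max (alphaStar W2 / IStar1 W2) (2 * betaStar W1 / IStar2 W1)} := by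
  intro r hr
  obtain ⟨P, hP, hrP⟩ := Set.mem_iUnion₂.mp hr
  have ⟨hr1, hr1le, hr2, hr2le⟩ := hrP
  refine ⟨⟨⟨hr1, hr1le.trans (condMI12_le_IStar1 hW2 hP)⟩,
      ⟨hr2, hr2le.trans (condMI21_le_IStar2 hW1 hP)⟩⟩,
    _, max_sub_mem_innerBound_of_mem_rateRegion hW1 hW2 hP hrP, ?_⟩
  have hβ : 0 ≤ 2 * betaStar W1 := mul_nonneg zero_le_two betaStar_nonneg
  exact max_le_max
    (div_le_div_of_nonneg_right (abs_sub_max_sub_zero_le hr1 alphaStar_nonneg)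
      (IStar1_nonneg hW2))
    (div_le_div_of_nonneg_right (abs_sub_max_sub_zero_le hr2 hβ) (IStar2_nonneg hW1))

/-- with ε = max(α*/I*₁, 2β*/I*₂), the ε-neighborhood C_{I,ε} of Shannon's
inner bound contains C_O, i.e. C_{I,ε} is an ε-approximated capacity region. -/
theorem stmt14 [Nonempty X1] [Nonempty X2]
    (W1 : X1 → X2 → Y1 → ℝ) (W2 : X1 → X2 → Y2 → ℝ)
    (hW1 : ∀ x1 x2, IsDist (W1 x1 x2)) (hW2 : ∀ x1 x2, IsDist (W2 x1 x2))
    (h1 : 0 < IStar1 W2) (h2 : 0 < IStar2 W1) :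
    outerBound W1 W2 ⊆
      {r : ℝ × ℝ | r ∈ Set.Icc 0 (IStar1 W2) ×ˢ Set.Icc 0 (IStar2 W1) ∧
        ∃ r' ∈ innerBound W1 W2,
          max (|r.1 - r'.1| / IStar1 W2) (|r.2 - r'.2| / IStar2 W1) ≤
            max (alphaStar W2 / IStar1 W2) (2 * betaStar W1 / IStar2 W1)} :=
  stmt14_general W1 W2 hW1 hW2

end TWC
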